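/- Let L be a loop with identity e and let 𝒩 be a normal subgroup of Mult(L). Then the orbit 𝒩(e) = { n(e) : n ∈ 𝒩 } is a normal subloop of L. -/
import Mathlib


open Pointwise

/-- A loop: a binary system with identity in which left and right
translations are uniquely invertible. -/
class LoopStr (L : Type*) extends Mul L, One L where
  one_mul : ∀ a : L, 1 * a = a
  mul_one : ∀ a : L, a * 1 = a
  existsUnique_ldiv : ∀ a b : L, ∃! y, a * y = b
  existsUnique_rdiv : ∀ a b : L, ∃! x, x * a = b

variable {L : Type*} [LoopStr L]

/-- The left translation `λ_a : y ↦ a * y` as a permutation of `L`. -/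
noncomputable def leftT (a : L) : Equiv.Perm L :=
  Equiv.ofBijective (fun y => a * y)
    ⟨fun y₁ y₂ h => by
      obtain ⟨y, -, hu⟩ := LoopStr.existsUnique_ldiv a (a * y₂)
      exact (hu y₁ h).trans (hu y₂ rfl).symm,
     fun b => (LoopStr.existsUnique_ldiv a b).exists⟩

/-- The right translation `ρ_a : y ↦ y * a` as a permutation of `L`. -/
noncomputable def rightT (a : L) : Equiv.Perm L :=
  Equiv.ofBijective (fun y => y * a)
    ⟨fun y₁ y₂ h => by
      obtain ⟨y, -, hu⟩ := LoopStr.existsUnique_rdiv a (y₂ * a)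
      exact (hu y₁ h).trans (hu y₂ rfl).symm,
     fun b => (LoopStr.existsUnique_rdiv a b).exists⟩

/-- The multiplication group `Mult(L)`: the subgroup of `Perm L` generated by
all left and right translations. -/
noncomputable def MultL (L : Type*) [LoopStr L] : Subgroup (Equiv.Perm L) :=
  Subgroup.closure {f | ∃ a : L, f = leftT a ∨ f = rightT a}

/-- The inner mapping group `Inn(L)`: the stabilizer of the identity in `Mult(L)`. -/
noncomputable def InnL (L : Type*) [LoopStr L] : Subgroup (Equiv.Perm L) :=
  MultL L ⊓ MulAction.stabilizer (Equiv.Perm L) (1 : L)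

/-- Left division: the unique `y` with `a * y = b`. -/
noncomputable def ldivL (a b : L) : L := (LoopStr.existsUnique_ldiv a b).choose

/-- Right division: the unique `x` with `x * a = b`. -/
noncomputable def rdivL (b a : L) : L := (LoopStr.existsUnique_rdiv a b).choose

/-- A subloop of `L`: a subset containing the identity and closed under
multiplication and both divisions. -/
structure IsSubloop (N : Set L) : Prop where
  one_mem : (1 : L) ∈ N
  mul_mem : ∀ a ∈ N, ∀ b ∈ N, a * b ∈ N
  ldiv_mem : ∀ a ∈ N, ∀ b ∈ N, ldivL a b ∈ N
  rdiv_mem : ∀ a ∈ N, ∀ b ∈ N, rdivL b a ∈ N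

/-- A normal subloop: `xN = Nx`, `(xN)y = x(Ny)` and `x(yN) = (xy)N` for all `x, y`. -/
def IsNormalSubloop (N : Set L) : Prop :=
  IsSubloop N ∧ ∀ x y : L,
    ({x} : Set L) * N = N * {x} ∧
    (({x} : Set L) * N) * {y} = ({x} : Set L) * (N * {y}) ∧
    ({x} : Set L) * (({y} : Set L) * N) = (({x} : Set L) * {y}) * N

set_option linter.unusedSectionVars false

section Aux


variable (N : Subgroup (MultL L)) [hN : N.Normal]

def orbN (x : L) : Set L := {l : L | ∃ n : MultL L, n ∈ N ∧ (n : Equiv.Perm L) x = l}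

lemma self_mem_orbN (x : L) : x ∈ orbN N x := ⟨1, one_mem N, rfl⟩

lemma orbN_map (g : MultL L) (x : L) :
    (fun l => (g : Equiv.Perm L) l) '' orbN N x = orbN N ((g : Equiv.Perm L) x) := by
  ext l
  constructor
  · rintro ⟨-, ⟨n, hn, rfl⟩, rfl⟩
    exact ⟨g * n * g⁻¹, hN.conj_mem n hn g, by simp⟩
  · rintro ⟨n, hn, rfl⟩
    exact ⟨((g⁻¹ * n * g : MultL L) : Equiv.Perm L) x,
      ⟨g⁻¹ * n * g, by simpa using hN.conj_mem n hn g⁻¹, rfl⟩, by simp⟩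

lemma orbN_eq_of_mem {x y : L} (h : y ∈ orbN N x) : orbN N y = orbN N x := by
  obtain ⟨n, hn, rfl⟩ := h
  ext l
  constructor
  · rintro ⟨m, hm, rfl⟩
    exact ⟨m * n, mul_mem hm hn, by simp⟩
  · rintro ⟨m, hm, rfl⟩
    exact ⟨m * n⁻¹, mul_mem hm (inv_mem hn), by simp⟩

lemma leftT_mem (a : L) : leftT a ∈ MultL L := Subgroup.subset_closure ⟨a, Or.inl rfl⟩
lemma rightT_mem (a : L) : rightT a ∈ MultL L := Subgroup.subset_closure ⟨a, Or.inr rfl⟩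

lemma leftT_image (a x : L) : (fun t => a * t) '' orbN N x = orbN N (a * x) :=
  orbN_map N ⟨leftT a, leftT_mem a⟩ x

lemma rightT_image (a x : L) : (fun t => t * a) '' orbN N x = orbN N (x * a) :=
  orbN_map N ⟨rightT a, rightT_mem a⟩ x

lemma singleton_mul_orbN (a x : L) : ({a} : Set L) * orbN N x = orbN N (a * x) := by
  rw [Set.singleton_mul]; exact leftT_image N a x

lemma orbN_mul_singleton (a x : L) : orbN N x * ({a} : Set L) = orbN N (x * a) := by
  rw [Set.mul_singleton]; exact rightT_image N a x

end Aux

theorem orbit_normal_subloop (N : Subgroup (MultL L)) [N.Normal] :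
    IsNormalSubloop {l : L | ∃ n : MultL L, n ∈ N ∧ (n : Equiv.Perm L) 1 = l} := by
  have hS : {l : L | ∃ n : MultL L, n ∈ N ∧ (n : Equiv.Perm L) 1 = l} = orbN N 1 := rfl
  rw [hS]
  constructor
  · constructor
    · exact self_mem_orbN N 1
    · intro a ha b hb
      have : a * b ∈ orbN N (a * 1) := by
        rw [← leftT_image N a 1]; exact ⟨b, hb, rfl⟩
      rwa [LoopStr.mul_one, orbN_eq_of_mem N ha] at this
    · intro a ha b hb
      have hy := (LoopStr.existsUnique_ldiv a b).choose_spec.1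
      -- a * ldivL a b = b
      have hb' : b ∈ orbN N a := by rwa [orbN_eq_of_mem N ha]
      rw [← LoopStr.mul_one (L := L) a, ← leftT_image N a 1] at hb'
      obtain ⟨z, hz, hzb⟩ := hb'
      have : z = ldivL a b := by
        obtain ⟨y, -, hu⟩ := LoopStr.existsUnique_ldiv a b
        exact (hu z hzb).trans (hu _ hy).symm
      rwa [this] at hz
    · intro a ha b hb
      have hy := (LoopStr.existsUnique_rdiv a b).choose_spec.1
      -- rdivL b a * a = b
      have hb' : b ∈ orbN N a := by rwa [orbN_eq_of_mem N ha]
      rw [← LoopStr.one_mul (L := L) a, ← rightT_image N a 1] at hb'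
      obtain ⟨z, hz, hzb⟩ := hb'
      have : z = rdivL b a := by
        obtain ⟨y, -, hu⟩ := LoopStr.existsUnique_rdiv a b
        exact (hu z hzb).trans (hu _ hy).symm
      rwa [this] at hz
  · intro x y
    refine ⟨?_, ?_, ?_⟩
    · rw [singleton_mul_orbN, orbN_mul_singleton, LoopStr.mul_one, LoopStr.one_mul]
    · rw [singleton_mul_orbN, orbN_mul_singleton, orbN_mul_singleton, singleton_mul_orbN,
        LoopStr.mul_one, LoopStr.one_mul]
    · rw [singleton_mul_orbN, singleton_mul_orbN, Set.singleton_mul_singleton,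
        singleton_mul_orbN, LoopStr.mul_one, LoopStr.mul_one]
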